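/- arXiv:1311.3607 — 2 statements merged into one kernel-verified Lean document; each statement's English description precedes it below -/
import Mathlib

section
/- Let σ = v_{j_1}, …, v_{j_n} be a linear order on a finite set L = {v_1, …, v_n}, let L' = {v'_1, …, v'_n} and L'' = {v''_1, …, v''_n} be two disjoint copies of L, and define the linear order σ* on L' ∪ L'' as v'_{j_1}, …, v'_{j_n}, v''_{j_n}, …, v''_{j_1} (the first block in the order of σ, the second block in the reverse order). Let E_1, E_2 be sets of unordered pairs of elements of L that are each noncrossing in σ, and let E*_1 = { {v'_i, v'_j} : {v_i, v_j} ∈ E_1 } ∪ { {v''_i, v''_j} : {v_i, v_j} ∈ E_2 } and E*_2 = { {v'_i, v''_i} : 1 ≤ i ≤ n }. Then E*_1 and E*_2 are each noncrossing in σ*. -/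
open Function Set

/-- `x` lies strictly between `a` and `b` in the linear order given by the
injective position function `pos`. -/
def Between {α : Type*} (pos : α → ℕ) (a x b : α) : Prop :=
  (pos a < pos x ∧ pos x < pos b) ∨ (pos b < pos x ∧ pos x < pos a)

/-- The edges `{a,b}` and `{c,d}` (with pairwise distinct endpoints) alternate in the
order given by `pos`: exactly one of `c`, `d` lies strictly between `a` and `b`. -/
def Alternates {α : Type*} (pos : α → ℕ) (a b c d : α) : Prop :=
  Xor' (Between pos a c b) (Between pos a d b)

/-- A set `E` of edges (unordered pairs) is noncrossing in the order given by `pos`: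
no two edges of `E` with four pairwise distinct endpoints alternate. -/
def Noncrossing {α : Type*} (pos : α → ℕ) (E : Set (Sym2 α)) : Prop :=
  ∀ a b c d : α, s(a, b) ∈ E → s(c, d) ∈ E →
    a ≠ b → a ≠ c → a ≠ d → b ≠ c → b ≠ d → c ≠ d →
    ¬ Alternates pos a b c d

/-- `A ⊆ L` is an interval of the linear order induced by `pos` on `L`. -/
def IsIntervalOn {α : Type*} (pos : α → ℕ) (L A : Set α) : Prop :=
  ∀ a b c, a ∈ A → b ∈ L → c ∈ A → pos a ≤ pos b → pos b ≤ pos c → b ∈ A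

/-- `A ⊆ L` is a circular interval of the linear order induced by `pos` on `L`:
`A` or `L ∖ A` is an interval. -/
def IsCircularIntervalOn {α : Type*} (pos : α → ℕ) (L A : Set α) : Prop :=
  IsIntervalOn pos L A ∨ IsIntervalOn pos L (L \ A)

/-- The set of leaves (vertices with exactly one neighbour) of a graph. -/
def leafSet {V : Type*} (G : SimpleGraph V) : Set V := {v | ∃! w, G.Adj v w}

/-- A linear order on the leaves of `T` (given by a position function `pos`) is
represented by `T`: for every edge of `T`, the set of leaves contained in each of the two
connected components of `T` minus that edge is a circular interval of the order. -/
def RepresentedBy {V : Type*} (T : SimpleGraph V) (pos : V → ℕ) : Prop :=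
  ∀ u v : V, T.Adj u v →
    IsCircularIntervalOn pos (leafSet T)
      {l | l ∈ leafSet T ∧ (T.deleteEdges {s(u, v)}).Reachable u l}

/-- Order reversal preserves `Alternates`. -/
lemma alternates_rev {α : Type*} (N : ℕ) (f : α → ℕ) (a b c d : α)
    (ha : f a < N) (hb : f b < N) (hc : f c < N) (hd : f d < N) :
    Alternates (fun t => N - 1 - f t) a b c d ↔ Alternates f a b c d := by
  simp only [Alternates, Between, Xor', Xor]
  omega

lemma mem_sym2_map_img {α β : Type*} (f : α → β) (E : Set (Sym2 α)) (a b : β)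
    (h : s(a, b) ∈ Sym2.map f '' E) :
    ∃ x y, s(x, y) ∈ E ∧ a = f x ∧ b = f y := by
  obtain ⟨p, hp, hpe⟩ := h
  induction p using Sym2.ind with
  | _ x y =>
    rw [Sym2.map_pair_eq, Sym2.eq_iff] at hpe
    rcases hpe with ⟨h1, h2⟩ | ⟨h1, h2⟩
    · exact ⟨x, y, hp, h1.symm, h2.symm⟩
    · exact ⟨y, x, by rwa [Sym2.eq_swap], h2.symm, h1.symm⟩

/-- given a linear order `σ` on `L` (the enumeration `e : L ≃ Fin n`) and
sets `E_1`, `E_2` of edges each noncrossing in `σ`, the sets `E*_1` and `E*_2` are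
noncrossing in the order `σ* = v'_{j_1}, …, v'_{j_n}, v''_{j_n}, …, v''_{j_1}` on the
two disjoint copies `L' = Sum.inl '' L` and `L'' = Sum.inr '' L`
(first block ordered as `σ`, second block reversed). -/
theorem stmt6 {L : Type*} (n : ℕ) (e : L ≃ Fin n)
    (E₁ E₂ : Set (Sym2 L))
    (h₁ : Noncrossing (fun v => (e v : ℕ)) E₁)
    (h₂ : Noncrossing (fun v => (e v : ℕ)) E₂) :
    Noncrossing
        (Sum.elim (fun v : L => (e v : ℕ)) (fun v : L => 2 * n - 1 - (e v : ℕ)))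
        (Sym2.map (Sum.inl : L → L ⊕ L) '' E₁ ∪
          Sym2.map (Sum.inr : L → L ⊕ L) '' E₂) ∧
      Noncrossing
        (Sum.elim (fun v : L => (e v : ℕ)) (fun v : L => 2 * n - 1 - (e v : ℕ)))
        {p : Sym2 (L ⊕ L) | ∃ v : L, p = s(Sum.inl v, Sum.inr v)} := by

  have hlt : ∀ v : L, (e v : ℕ) < n := fun v => (e v).isLt
  constructor
  · intro a b c d hab hcd hab' hac had hbc hbd hcd'
    rcases hab with h1 | h1 <;> rcases hcd with h2 | h2
    · -- both edges in the first copy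
      obtain ⟨x, y, hxy, rfl, rfl⟩ := mem_sym2_map_img _ _ _ _ h1
      obtain ⟨z, w, hzw, rfl, rfl⟩ := mem_sym2_map_img _ _ _ _ h2
      intro H
      exact h₁ x y z w hxy hzw
        (Sum.inl_injective.ne_iff.mp hab') (Sum.inl_injective.ne_iff.mp hac)
        (Sum.inl_injective.ne_iff.mp had) (Sum.inl_injective.ne_iff.mp hbc)
        (Sum.inl_injective.ne_iff.mp hbd) (Sum.inl_injective.ne_iff.mp hcd') H
    · -- first edge in the first copy, second edge in the second copy
      obtain ⟨x, y, hxy, rfl, rfl⟩ := mem_sym2_map_img _ _ _ _ h1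
      obtain ⟨z, w, hzw, rfl, rfl⟩ := mem_sym2_map_img _ _ _ _ h2
      have hx := hlt x; have hy := hlt y; have hz := hlt z; have hw := hlt w
      simp only [Alternates, Between, Xor', Xor, Sum.elim_inl, Sum.elim_inr]
      omega
    · -- first edge in the second copy, second edge in the first copy
      obtain ⟨x, y, hxy, rfl, rfl⟩ := mem_sym2_map_img _ _ _ _ h1
      obtain ⟨z, w, hzw, rfl, rfl⟩ := mem_sym2_map_img _ _ _ _ h2
      have hx := hlt x; have hy := hlt y; have hz := hlt z; have hw := hlt w
      simp only [Alternates, Between, Xor', Xor, Sum.elim_inl, Sum.elim_inr]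
      omega
    · -- both edges in the second copy
      obtain ⟨x, y, hxy, rfl, rfl⟩ := mem_sym2_map_img _ _ _ _ h1
      obtain ⟨z, w, hzw, rfl, rfl⟩ := mem_sym2_map_img _ _ _ _ h2
      intro H
      have H' : Alternates (fun t => 2 * n - 1 - ((e t : ℕ))) x y z w := H
      rw [alternates_rev (2 * n) (fun v => (e v : ℕ)) x y z w
        (show ((e x : ℕ)) < 2 * n by have := hlt x; omega)
        (show ((e y : ℕ)) < 2 * n by have := hlt y; omega)
        (show ((e z : ℕ)) < 2 * n by have := hlt z; omega)
        (show ((e w : ℕ)) < 2 * n by have := hlt w; omega)] at H'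
      exact h₂ x y z w hxy hzw
        (Sum.inr_injective.ne_iff.mp hab') (Sum.inr_injective.ne_iff.mp hac)
        (Sum.inr_injective.ne_iff.mp had) (Sum.inr_injective.ne_iff.mp hbc)
        (Sum.inr_injective.ne_iff.mp hbd) (Sum.inr_injective.ne_iff.mp hcd') H'
  · intro a b c d hab hcd hab' hac had hbc hbd hcd'
    obtain ⟨v, hv⟩ := hab
    obtain ⟨w, hw⟩ := hcd
    rw [Sym2.eq_iff] at hv hw
    have hlv := hlt v; have hlw := hlt w
    rcases hv with ⟨rfl, rfl⟩ | ⟨rfl, rfl⟩ <;>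
      rcases hw with ⟨rfl, rfl⟩ | ⟨rfl, rfl⟩ <;>
      · simp only [Alternates, Between, Xor', Xor, Sum.elim_inl, Sum.elim_inr]
        omega
end

section
/- Let G be a finite graph with a positive-integer edge weight function ω, let S be a subset of the vertices of G, and let G' be the graph obtained from G by replacing each edge e with a path P(e) of ω(e) edges through new internal vertices (so that S contains no new subdivision vertex). Let T' be a subtree of G' whose vertex set contains S and which is edge-minimal with this property (no proper subtree of T' has vertex set containing S). Then for every edge e of G, the tree T' contains either all of the edges of P(e) or none of them. -/
open Function Set

/-- The smaller endpoint of an unordered pair (w.r.t. a linear order on `V`). -/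
def efst {V : Type*} [LinearOrder V] (e : Sym2 V) : V :=
  Sym2.lift ⟨fun a b => min a b, fun a b => min_comm a b⟩ e

/-- The larger endpoint of an unordered pair (w.r.t. a linear order on `V`). -/
def esnd {V : Type*} [LinearOrder V] (e : Sym2 V) : V :=
  Sym2.lift ⟨fun a b => max a b, fun a b => max_comm a b⟩ e

/-- The edges of the path `P(e)` replacing the edge `e = {u,v}` in the subdivided
graph: a path of `ω e` edges from `Sum.inl u` to `Sum.inl v` through the `ω e - 1` new
internal vertices `Sum.inr (e, 1), …, Sum.inr (e, ω e - 1)`. -/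
def pathEdges {V : Type*} [LinearOrder V] (ω : Sym2 V → ℕ) (e : Sym2 V) :
    Set (Sym2 (V ⊕ (Sym2 V × ℕ))) :=
  if ω e = 1 then {Sym2.map Sum.inl e}
  else
    {s(Sum.inl (efst e), Sum.inr (e, 1)),
      s(Sum.inr (e, ω e - 1), Sum.inl (esnd e))} ∪
    {p | ∃ i : ℕ, 1 ≤ i ∧ i + 1 ≤ ω e - 1 ∧ p = s(Sum.inr (e, i), Sum.inr (e, i + 1))}

/-- The graph `G'` obtained from `G` by replacing each edge `e` by a path of `ω e`
edges through `ω e - 1` new internal vertices (distinct for distinct edges). -/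
def subdividedGraph {V : Type*} [LinearOrder V] (G : SimpleGraph V) (ω : Sym2 V → ℕ) :
    SimpleGraph (V ⊕ (Sym2 V × ℕ)) :=
  SimpleGraph.fromEdgeSet (⋃ e ∈ G.edgeSet, pathEdges ω e)

/-! ### Auxiliary material -/

section Leaf

open SimpleGraph

variable {W : Type*} {G' : SimpleGraph W}

private lemma first_edge_mem {x y : W} (p : G'.Walk x y) (hxy : x ≠ y) :
    ∃ c, G'.Adj x c ∧ s(x, c) ∈ p.edges := by
  cases p with
  | nil => exact absurd rfl hxy
  | cons h q => exact ⟨_, h, by simp⟩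

private lemma walk_to_deleteVerts (T' : G'.Subgraph) (v : W)
    {x y : T'.verts} (p : T'.coe.Walk x y) (hp : ∀ z ∈ p.support, (z : W) ≠ v) :
    (T'.deleteVerts {v}).coe.Reachable
      ⟨x.1, ⟨x.2, by simpa using hp x p.start_mem_support⟩⟩
      ⟨y.1, ⟨y.2, by simpa using hp y p.end_mem_support⟩⟩ := by
  induction p with
  | nil => rfl
  | @cons a b c h q ih =>
    have hab : (T'.deleteVerts {v}).coe.Adj
        ⟨a.1, ⟨a.2, by simpa using hp a (by simp)⟩⟩
        ⟨b.1, ⟨b.2, by simpa using hp b (by simp)⟩⟩ := by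
      simp only [Subgraph.coe_adj, Subgraph.deleteVerts_adj]
      exact ⟨a.2, by simpa using hp a (by simp), b.2, by simpa using hp b (by simp), h⟩
    exact hab.reachable.trans (ih (fun z hz => hp z (by simp [hz])))

/-- If a subtree `T'` is edge-minimal among subtrees whose vertices contain `A`, then it
has no leaf outside `A`: a contradiction follows from a vertex `v ∉ A` with a unique
neighbour. -/
private lemma leaf_contra {A : Set W} (T' : G'.Subgraph)
    (hconn : T'.Connected) (hacyc : T'.coe.IsAcyclic)
    (hA : A ⊆ T'.verts)
    (hmin : ∀ H : G'.Subgraph, H < T' → H.Connected → H.coe.IsAcyclic → A ⊆ H.verts → False)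
    {v w : W} (hvA : v ∉ A) (hadj : T'.Adj v w)
    (huniq : ∀ x, T'.Adj v x → x = w) : False := by
  classical
  set H := T'.deleteVerts {v} with hH
  have hle : H ≤ T' := Subgraph.deleteVerts_le
  have hvT : v ∈ T'.verts := hadj.fst_mem
  have hwT : w ∈ T'.verts := hadj.snd_mem
  have hwv : w ≠ v := hadj.ne.symm
  -- every path in T' between vertices ≠ v avoids v
  have key : ∀ {x y : T'.verts} (p : T'.coe.Walk x y), p.IsPath → (x : W) ≠ v → (y : W) ≠ v →
      ∀ z ∈ p.support, (z : W) ≠ v := by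
    intro x y p hp hx hy z hz hzv
    have hzz : z = ⟨v, hvT⟩ := Subtype.ext hzv
    subst hzz
    set vv : T'.verts := (⟨v, hvT⟩ : T'.verts) with hvv
    have hspec := p.take_spec hz
    have hnodup : ((p.takeUntil vv hz).edges ++ (p.dropUntil vv hz).edges).Nodup := by
      rw [← Walk.edges_append, hspec]; exact hp.edges_nodup
    obtain ⟨c, hc, hcmem⟩ := first_edge_mem (p.dropUntil vv hz)
      (fun h => hy (by rw [← h]))
    obtain ⟨d, hd, hdmem⟩ := first_edge_mem (p.takeUntil vv hz).reverse
      (fun h => hx (by rw [← h]))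
    have hcw : c = (⟨w, hwT⟩ : T'.verts) := Subtype.ext (huniq _ hc)
    have hdw : d = (⟨w, hwT⟩ : T'.verts) := Subtype.ext (huniq _ hd)
    rw [Walk.edges_reverse, List.mem_reverse] at hdmem
    rw [hdw, ← hcw] at hdmem
    exact (List.disjoint_of_nodup_append hnodup) hdmem hcmem
  -- H is connected
  have hconnH : H.Connected := by
    rw [Subgraph.connected_iff]
    constructor
    · constructor
      rintro ⟨a, ha⟩ ⟨b, hb⟩
      have ha' : a ∈ T'.verts := ha.1
      have hb' : b ∈ T'.verts := hb.1
      have hav : a ≠ v := by simpa using ha.2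
      have hbv : b ≠ v := by simpa using hb.2
      obtain ⟨p⟩ := hconn.coe ⟨a, ha'⟩ ⟨b, hb'⟩
      obtain ⟨q, hq⟩ : ∃ q : T'.coe.Walk ⟨a, ha'⟩ ⟨b, hb'⟩, q.IsPath :=
        ⟨p.toPath, p.toPath.2⟩
      exact walk_to_deleteVerts T' v q (key q hq hav hbv)
    · exact ⟨w, hwT, by simpa using hwv⟩
  -- H is acyclic
  have hacycH : H.coe.IsAcyclic := fun a c hc =>
    hacyc _ (hc.map (Subgraph.inclusion.injective hle))
  -- H < T'
  have hlt : H < T' := lt_of_le_of_ne hle (fun h => by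
    have : v ∈ H.verts := h ▸ hvT
    simp [hH, Subgraph.deleteVerts_verts] at this)
  exact hmin H hlt hconnH hacycH (fun a haA =>
    ⟨hA haA, by simp; rintro rfl; exact hvA haA⟩)

end Leaf

/-- The `k`-th edge of the subdivision path `P(e)`, for `k < ω e`. -/
def Ed {V : Type*} [LinearOrder V] (ω : Sym2 V → ℕ) (e : Sym2 V) (k : ℕ) :
    Sym2 (V ⊕ (Sym2 V × ℕ)) :=
  s(if k = 0 then Sum.inl (efst e) else Sum.inr (e, k),
    if k + 1 = ω e then Sum.inl (esnd e) else Sum.inr (e, k + 1))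

lemma efst_esnd {V : Type*} [LinearOrder V] (e : Sym2 V) : s(efst e, esnd e) = e := by
  induction e with
  | _ a b =>
    show s(min a b, max a b) = s(a, b)
    rcases le_total a b with h | h
    · rw [min_eq_left h, max_eq_right h]
    · rw [min_eq_right h, max_eq_left h, Sym2.eq_swap]

lemma pathEdges_eq {V : Type*} [LinearOrder V] (ω : Sym2 V → ℕ) (e : Sym2 V)
    (h : 1 ≤ ω e) : pathEdges ω e = {f | ∃ k < ω e, f = Ed ω e k} := by
  rw [pathEdges]
  split_ifs with h1
  · ext f
    simp only [Set.mem_singleton_iff, Set.mem_setOf_eq, h1, Nat.lt_one_iff]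
    constructor
    · rintro rfl
      refine ⟨0, rfl, ?_⟩
      rw [Ed, if_pos rfl, if_pos (by omega)]
      conv_lhs => rw [← efst_esnd e]
      rw [Sym2.map_pair_eq]
    · rintro ⟨k, rfl, rfl⟩
      rw [Ed, if_pos rfl, if_pos (by omega)]
      conv_rhs => rw [← efst_esnd e]
      rw [Sym2.map_pair_eq]
  · have h2 : 2 ≤ ω e := by omega
    ext f
    simp only [Set.mem_union, Set.mem_insert_iff, Set.mem_singleton_iff, Set.mem_setOf_eq]
    constructor
    · rintro ((rfl | rfl) | ⟨i, hi1, hi2, rfl⟩)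
      · exact ⟨0, by omega, by rw [Ed, if_pos rfl, if_neg (by omega)]⟩
      · refine ⟨ω e - 1, by omega, ?_⟩
        rw [Ed, if_neg (by omega), if_pos (by omega)]
      · refine ⟨i, by omega, ?_⟩
        rw [Ed, if_neg (by omega), if_neg (by omega)]
    · rintro ⟨k, hk, rfl⟩
      rcases Nat.eq_zero_or_pos k with rfl | hk0
      · exact Or.inl (Or.inl (by rw [Ed, if_pos rfl, if_neg (by omega)]))
      · rcases eq_or_ne (k + 1) (ω e) with hke | hke
        · refine Or.inl (Or.inr ?_)
          have hk1 : ω e - 1 = k := by omega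
          rw [Ed, if_neg (by omega), if_pos hke, hk1]
        · exact Or.inr ⟨k, by omega, by omega,
            by rw [Ed, if_neg (by omega), if_neg hke]⟩

/-- Any edge of the subdivided graph containing the internal vertex `Sum.inr (e, k+1)`
is one of the (at most) two subdivision edges of `P(e)` at that vertex. -/
lemma edge_at_inr {V : Type*} [LinearOrder V] {G : SimpleGraph V} {ω : Sym2 V → ℕ}
    (hω : ∀ e ∈ G.edgeSet, 0 < ω e) {e : Sym2 V} {k : ℕ}
    {f : Sym2 (V ⊕ (Sym2 V × ℕ))} (hf : f ∈ (subdividedGraph G ω).edgeSet)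
    (hmem : Sum.inr (e, k + 1) ∈ f) : f = Ed ω e k ∨ f = Ed ω e (k + 1) := by
  rw [subdividedGraph, SimpleGraph.edgeSet_fromEdgeSet] at hf
  obtain ⟨hfU, -⟩ := hf
  simp only [Set.mem_iUnion] at hfU
  obtain ⟨e', he', hfe'⟩ := hfU
  rw [pathEdges_eq ω e' (hω e' he')] at hfe'
  obtain ⟨j, hj, rfl⟩ := hfe'
  rw [Ed, Sym2.mem_iff] at hmem
  rcases hmem with hm | hm
  · rcases eq_or_ne j 0 with rfl | hj0
    · rw [if_pos rfl] at hm; exact absurd hm (by simp)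
    · rw [if_neg hj0] at hm
      simp only [Sum.inr.injEq, Prod.mk.injEq] at hm
      obtain ⟨rfl, rfl⟩ := hm
      exact Or.inr rfl
  · rcases eq_or_ne (j + 1) (ω e') with hj1 | hj1
    · rw [if_pos hj1] at hm; exact absurd hm (by simp)
    · rw [if_neg hj1] at hm
      simp only [Sum.inr.injEq, Prod.mk.injEq] at hm
      obtain ⟨rfl, hk⟩ := hm
      have : j = k := by omega
      subst this
      exact Or.inl rfl

private lemma step_iff {V : Type*} [LinearOrder V] {G : SimpleGraph V} {ω : Sym2 V → ℕ}
    (hω : ∀ e ∈ G.edgeSet, 0 < ω e) {S : Set V}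
    (T' : (subdividedGraph G ω).Subgraph)
    (hconn : T'.Connected) (hacyc : T'.coe.IsAcyclic)
    (hS : Sum.inl '' S ⊆ T'.verts)
    (hmin : ∀ H : (subdividedGraph G ω).Subgraph, H < T' →
      H.Connected → H.coe.IsAcyclic → Sum.inl '' S ⊆ H.verts → False)
    {e : Sym2 V} {k : ℕ} (hk : k + 1 < ω e) :
    Ed ω e k ∈ T'.edgeSet ↔ Ed ω e (k + 1) ∈ T'.edgeSet := by
  have hvA : (Sum.inr (e, k + 1) : V ⊕ (Sym2 V × ℕ)) ∉ Sum.inl '' S := by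
    rintro ⟨s, -, hs⟩; exact Sum.inl_ne_inr hs
  constructor
  · intro h1
    by_contra h2
    obtain ⟨uk, hEk, hvuk⟩ : ∃ u, Ed ω e k = s(u, Sum.inr (e, k + 1)) ∧
        (Sum.inr (e, k + 1) : V ⊕ (Sym2 V × ℕ)) ≠ u :=
      ⟨_, by rw [Ed, if_neg (show ¬k + 1 = ω e by omega)], by
        split_ifs with h0
        · simp
        · simp only [ne_eq, Sum.inr.injEq, Prod.mk.injEq, not_and]
          intro _; omega⟩
    have hadj : T'.Adj (Sum.inr (e, k + 1)) uk :=
      (SimpleGraph.Subgraph.mem_edgeSet.mp (hEk ▸ h1)).symm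
    refine leaf_contra T' hconn hacyc hS hmin hvA hadj ?_
    intro x hx
    have hxT : s(Sum.inr (e, k + 1), x) ∈ T'.edgeSet :=
      SimpleGraph.Subgraph.mem_edgeSet.mpr hx
    rcases edge_at_inr hω (T'.edgeSet_subset hxT) (Sym2.mem_mk_left _ _) with hcase | hcase
    · rw [hEk] at hcase
      rcases Sym2.eq_iff.mp hcase with ⟨h, -⟩ | ⟨-, h⟩
      · exact absurd h hvuk
      · exact h
    · exact absurd (hcase ▸ hxT) h2
  · intro h1
    by_contra h2
    obtain ⟨wk, hEk1, hvwk⟩ : ∃ w, Ed ω e (k + 1) = s(Sum.inr (e, k + 1), w) ∧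
        (Sum.inr (e, k + 1) : V ⊕ (Sym2 V × ℕ)) ≠ w :=
      ⟨_, by rw [Ed, if_neg (Nat.succ_ne_zero k)], by
        split_ifs with h0
        · simp
        · simp only [ne_eq, Sum.inr.injEq, Prod.mk.injEq, not_and]
          intro _; omega⟩
    have hadj : T'.Adj (Sum.inr (e, k + 1)) wk :=
      SimpleGraph.Subgraph.mem_edgeSet.mp (hEk1 ▸ h1)
    refine leaf_contra T' hconn hacyc hS hmin hvA hadj ?_
    intro x hx
    have hxT : s(Sum.inr (e, k + 1), x) ∈ T'.edgeSet :=
      SimpleGraph.Subgraph.mem_edgeSet.mpr hx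
    rcases edge_at_inr hω (T'.edgeSet_subset hxT) (Sym2.mem_mk_left _ _) with hcase | hcase
    · exact absurd (hcase ▸ hxT) h2
    · rw [hEk1] at hcase
      rcases Sym2.eq_iff.mp hcase with ⟨-, h⟩ | ⟨h, -⟩
      · exact h
      · exact absurd h hvwk

/-- if `T'` is a subtree of the subdivided graph `G'` whose vertex set
contains (the copy of) `S` and that is edge-minimal with this property (no proper
subtree of `T'` has vertex set containing `S`), then for every edge `e` of `G` the
tree `T'` contains either all edges of the path `P(e)` or none of them. -/
theorem stmt11 {V : Type*} [Fintype V] [LinearOrder V]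
    (G : SimpleGraph V) (ω : Sym2 V → ℕ) (hω : ∀ e ∈ G.edgeSet, 0 < ω e)
    (S : Set V)
    (T' : (subdividedGraph G ω).Subgraph)
    (hconn : T'.Connected) (hacyc : T'.coe.IsAcyclic)
    (hS : Sum.inl '' S ⊆ T'.verts)
    (hmin : ∀ H : (subdividedGraph G ω).Subgraph, H < T' →
      H.Connected → H.coe.IsAcyclic → Sum.inl '' S ⊆ H.verts → False) :
    ∀ e ∈ G.edgeSet,
      pathEdges ω e ⊆ T'.edgeSet ∨ ∀ f ∈ pathEdges ω e, f ∉ T'.edgeSet := by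
  intro e he
  by_cases hex : ∃ f ∈ pathEdges ω e, f ∈ T'.edgeSet
  · left
    obtain ⟨f, hfP, hfT⟩ := hex
    rw [pathEdges_eq ω e (hω e he)] at hfP ⊢
    obtain ⟨j, hj, rfl⟩ := hfP
    have up : ∀ m, j + m < ω e → Ed ω e (j + m) ∈ T'.edgeSet := by
      intro m
      induction m with
      | zero => intro _; exact hfT
      | succ m ih =>
        intro hm
        have h1 : j + m + 1 < ω e := by omega
        have := (step_iff hω T' hconn hacyc hS hmin h1).mp (ih (by omega))
        rwa [show j + (m + 1) = j + m + 1 by omega]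
    have down : ∀ m, m ≤ j → Ed ω e (j - m) ∈ T'.edgeSet := by
      intro m
      induction m with
      | zero => intro _; simpa using hfT
      | succ m ih =>
        intro hm
        have h1 : (j - (m + 1)) + 1 < ω e := by omega
        have h2 : (j - (m + 1)) + 1 = j - m := by omega
        exact (step_iff hω T' hconn hacyc hS hmin h1).mpr (by rw [h2]; exact ih (by omega))
    rintro g ⟨k, hk, rfl⟩
    rcases le_or_gt j k with hjk | hjk
    · have := up (k - j) (by omega)
      rwa [show j + (k - j) = k by omega] at this
    · have := down (j - k) (by omega)
      rwa [show j - (j - k) = k by omega] at this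
  · right
    push_neg at hex
    exact hex
end
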